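/- For the braiding operator σ of the 4D₊ calculus on SU_q(2), the rank of the antisymmetriser A^{(2)} = id − σ on ℂ¹⁶ equals 6, i.e. dim ker(id − σ) = 10. -/

import Mathlib

/-- Index labels for the left-invariant 1-forms `ω₋, ω₊, ω₀, ω_z`. -/
inductive B | m | p | o | z
deriving DecidableEq

instance : Fintype B := Fintype.ofList [.m, .p, .o, .z] (fun x => by cases x <;> simp)

/-- The 16×16 braiding matrix `σ` of the 4D₊ bicovariant calculus on `SU_q(2)`:
`sig q i j` is the coefficient of the basis vector `ω_{i.1} ⊗ ω_{i.2}` in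
`σ(ω_{j.1} ⊗ ω_{j.2})`. -/
noncomputable def sig (q : ℝ) : Matrix (B × B) (B × B) ℂ := fun i j =>
  let Q : ℂ := (q : ℂ)
  match i, j with
  | (.m, .m), (.m, .m) => 1
  | (.p, .p), (.p, .p) => 1
  | (.o, .o), (.o, .o) => 1
  -- block on ω₋⊗ω₀, ω₀⊗ω₋, ω₋⊗ω_z, ω_z⊗ω₋
  | (.m, .o), (.m, .o) => 1 - Q^2
  | (.o, .m), (.m, .o) => 1
  | (.m, .o), (.o, .m) => Q^2
  | (.m, .o), (.m, .z) => 1 + Q^2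
  | (.z, .m), (.m, .z) => 1
  | (.m, .o), (.z, .m) => -1 - Q⁻¹^2
  | (.m, .z), (.z, .m) => Q⁻¹^2
  | (.z, .m), (.z, .m) => 1 - Q⁻¹^2
  -- block on ω₊⊗ω₀, ω₀⊗ω₊, ω₊⊗ω_z, ω_z⊗ω₊
  | (.p, .o), (.p, .o) => 1 - Q⁻¹^2
  | (.o, .p), (.p, .o) => 1
  | (.p, .o), (.o, .p) => Q⁻¹^2
  | (.p, .o), (.p, .z) => -1 - Q⁻¹^2
  | (.z, .p), (.p, .z) => 1
  | (.p, .o), (.z, .p) => 1 + Q^2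
  | (.p, .z), (.z, .p) => Q^2
  | (.z, .p), (.z, .p) => 1 - Q^2
  -- block on ω_z⊗ω₀, ω₀⊗ω_z, ω_z⊗ω_z, ω₋⊗ω₊, ω₊⊗ω₋
  | (.z, .o), (.z, .o) => -(Q - Q⁻¹)^2
  | (.o, .z), (.z, .o) => 1
  | (.m, .p), (.z, .o) => -(Q - Q⁻¹)^2
  | (.p, .m), (.z, .o) => (Q - Q⁻¹)^2
  | (.z, .o), (.o, .z) => 1
  | (.z, .o), (.z, .z) => Q^2 - Q⁻¹^2
  | (.z, .z), (.z, .z) => 1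
  | (.m, .p), (.z, .z) => Q^2 - Q⁻¹^2
  | (.p, .m), (.z, .z) => -(Q^2 - Q⁻¹^2)
  | (.z, .o), (.m, .p) => -1
  | (.p, .m), (.m, .p) => 1
  | (.z, .o), (.p, .m) => 1
  | (.m, .p), (.p, .m) => 1
  | _, _ => 0


section Aux
open Matrix

lemma sumB {M : Type*} [AddCommMonoid M] (f : B → M) :
    ∑ x : B, f x = f .m + f .p + f .o + f .z := by
  show Finset.sum _ f = _
  rw [show (Finset.univ : Finset B) = {B.m, B.p, B.o, B.z} from rfl]
  simp [Finset.sum_insert, add_assoc]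

/-- Column selection indices for six linearly independent columns of `1 - sig q`. -/
def cls : Fin 6 → B × B := ![(.m,.o), (.m,.z), (.p,.o), (.p,.z), (.z,.o), (.m,.p)]

/-- Ten explicit kernel vectors of `1 - sig q`. -/
noncomputable def kv (q : ℝ) : Fin 10 → (B × B → ℂ) :=
  let Q : ℂ := (q : ℂ)
  ![ fun p => if p = (.m,.m) then 1 else 0,
     fun p => if p = (.p,.p) then 1 else 0,
     fun p => if p = (.o,.o) then 1 else 0,
     fun p => if p = (.m,.o) then 1 else if p = (.o,.m) then 1 else 0,
     fun p => if p = (.m,.z) then 1 else if p = (.z,.m) then Q^2 else 0,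
     fun p => if p = (.p,.o) then 1 else if p = (.o,.p) then 1 else 0,
     fun p => if p = (.p,.z) then Q^2 else if p = (.z,.p) then 1 else 0,
     fun p => if p = (.z,.o) then 1 else if p = (.o,.z) then 1 else if p = (.m,.p) then -(Q - Q⁻¹)^2 else 0,
     fun p => if p = (.z,.z) then 1 else if p = (.m,.p) then Q^2 - Q⁻¹^2 else 0,
     fun p => if p = (.m,.p) then 1 else if p = (.p,.m) then 1 else 0 ]

set_option maxHeartbeats 1000000 in
private lemma ker0 (q : ℝ) (h0 : 0 < q) :
    ((1 : Matrix (B × B) (B × B) ℂ) - sig q).mulVec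
      (let Q : ℂ := (q : ℂ); fun p => if p = (.m,.m) then 1 else 0) = 0 := by
  have hq : (q : ℂ) ≠ 0 := by exact_mod_cast h0.ne'
  funext p
  obtain ⟨a, b⟩ := p
  cases a <;> cases b <;>
    simp [Matrix.mulVec, dotProduct, Fintype.sum_prod_type, sumB, sig,
      Matrix.sub_apply, Matrix.one_apply] <;>
    (try field_simp) <;> (try ring)

set_option maxHeartbeats 1000000 in
private lemma ker1 (q : ℝ) (h0 : 0 < q) :
    ((1 : Matrix (B × B) (B × B) ℂ) - sig q).mulVec
      (let Q : ℂ := (q : ℂ); fun p => if p = (.p,.p) then 1 else 0) = 0 := by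
  have hq : (q : ℂ) ≠ 0 := by exact_mod_cast h0.ne'
  funext p
  obtain ⟨a, b⟩ := p
  cases a <;> cases b <;>
    simp [Matrix.mulVec, dotProduct, Fintype.sum_prod_type, sumB, sig,
      Matrix.sub_apply, Matrix.one_apply] <;>
    (try field_simp) <;> (try ring)

set_option maxHeartbeats 1000000 in
private lemma ker2 (q : ℝ) (h0 : 0 < q) :
    ((1 : Matrix (B × B) (B × B) ℂ) - sig q).mulVec
      (let Q : ℂ := (q : ℂ); fun p => if p = (.o,.o) then 1 else 0) = 0 := by
  have hq : (q : ℂ) ≠ 0 := by exact_mod_cast h0.ne'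
  funext p
  obtain ⟨a, b⟩ := p
  cases a <;> cases b <;>
    simp [Matrix.mulVec, dotProduct, Fintype.sum_prod_type, sumB, sig,
      Matrix.sub_apply, Matrix.one_apply] <;>
    (try field_simp) <;> (try ring)

set_option maxHeartbeats 1000000 in
private lemma ker3 (q : ℝ) (h0 : 0 < q) :
    ((1 : Matrix (B × B) (B × B) ℂ) - sig q).mulVec
      (let Q : ℂ := (q : ℂ); fun p => if p = (.m,.o) then 1 else if p = (.o,.m) then 1 else 0) = 0 := by
  have hq : (q : ℂ) ≠ 0 := by exact_mod_cast h0.ne'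
  funext p
  obtain ⟨a, b⟩ := p
  cases a <;> cases b <;>
    simp [Matrix.mulVec, dotProduct, Fintype.sum_prod_type, sumB, sig,
      Matrix.sub_apply, Matrix.one_apply] <;>
    (try field_simp) <;> (try ring)

set_option maxHeartbeats 1000000 in
private lemma ker4 (q : ℝ) (h0 : 0 < q) :
    ((1 : Matrix (B × B) (B × B) ℂ) - sig q).mulVec
      (let Q : ℂ := (q : ℂ); fun p => if p = (.m,.z) then 1 else if p = (.z,.m) then Q^2 else 0) = 0 := by
  have hq : (q : ℂ) ≠ 0 := by exact_mod_cast h0.ne'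
  funext p
  obtain ⟨a, b⟩ := p
  cases a <;> cases b <;>
    simp [Matrix.mulVec, dotProduct, Fintype.sum_prod_type, sumB, sig,
      Matrix.sub_apply, Matrix.one_apply] <;>
    (try field_simp) <;> (try ring)

set_option maxHeartbeats 1000000 in
private lemma ker5 (q : ℝ) (h0 : 0 < q) :
    ((1 : Matrix (B × B) (B × B) ℂ) - sig q).mulVec
      (let Q : ℂ := (q : ℂ); fun p => if p = (.p,.o) then 1 else if p = (.o,.p) then 1 else 0) = 0 := by
  have hq : (q : ℂ) ≠ 0 := by exact_mod_cast h0.ne'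
  funext p
  obtain ⟨a, b⟩ := p
  cases a <;> cases b <;>
    simp [Matrix.mulVec, dotProduct, Fintype.sum_prod_type, sumB, sig,
      Matrix.sub_apply, Matrix.one_apply] <;>
    (try field_simp) <;> (try ring)

set_option maxHeartbeats 1000000 in
private lemma ker6 (q : ℝ) (h0 : 0 < q) :
    ((1 : Matrix (B × B) (B × B) ℂ) - sig q).mulVec
      (let Q : ℂ := (q : ℂ); fun p => if p = (.p,.z) then Q^2 else if p = (.z,.p) then 1 else 0) = 0 := by
  have hq : (q : ℂ) ≠ 0 := by exact_mod_cast h0.ne'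
  funext p
  obtain ⟨a, b⟩ := p
  cases a <;> cases b <;>
    simp [Matrix.mulVec, dotProduct, Fintype.sum_prod_type, sumB, sig,
      Matrix.sub_apply, Matrix.one_apply] <;>
    (try field_simp) <;> (try ring)

set_option maxHeartbeats 1000000 in
private lemma ker7 (q : ℝ) (h0 : 0 < q) :
    ((1 : Matrix (B × B) (B × B) ℂ) - sig q).mulVec
      (let Q : ℂ := (q : ℂ); fun p => if p = (.z,.o) then 1 else if p = (.o,.z) then 1 else if p = (.m,.p) then -(Q - Q⁻¹)^2 else 0) = 0 := by
  have hq : (q : ℂ) ≠ 0 := by exact_mod_cast h0.ne'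
  funext p
  obtain ⟨a, b⟩ := p
  cases a <;> cases b <;>
    simp [Matrix.mulVec, dotProduct, Fintype.sum_prod_type, sumB, sig,
      Matrix.sub_apply, Matrix.one_apply] <;>
    (try field_simp) <;> (try ring)

set_option maxHeartbeats 1000000 in
private lemma ker8 (q : ℝ) (h0 : 0 < q) :
    ((1 : Matrix (B × B) (B × B) ℂ) - sig q).mulVec
      (let Q : ℂ := (q : ℂ); fun p => if p = (.z,.z) then 1 else if p = (.m,.p) then Q^2 - Q⁻¹^2 else 0) = 0 := by
  have hq : (q : ℂ) ≠ 0 := by exact_mod_cast h0.ne'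
  funext p
  obtain ⟨a, b⟩ := p
  cases a <;> cases b <;>
    simp [Matrix.mulVec, dotProduct, Fintype.sum_prod_type, sumB, sig,
      Matrix.sub_apply, Matrix.one_apply] <;>
    (try field_simp) <;> (try ring)

set_option maxHeartbeats 1000000 in
private lemma ker9 (q : ℝ) (h0 : 0 < q) :
    ((1 : Matrix (B × B) (B × B) ℂ) - sig q).mulVec
      (let Q : ℂ := (q : ℂ); fun p => if p = (.m,.p) then 1 else if p = (.p,.m) then 1 else 0) = 0 := by
  have hq : (q : ℂ) ≠ 0 := by exact_mod_cast h0.ne'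
  funext p
  obtain ⟨a, b⟩ := p
  cases a <;> cases b <;>
    simp [Matrix.mulVec, dotProduct, Fintype.sum_prod_type, sumB, sig,
      Matrix.sub_apply, Matrix.one_apply] <;>
    (try field_simp) <;> (try ring)

set_option maxHeartbeats 1000000 in
lemma kv_ker (q : ℝ) (h0 : 0 < q) (k : Fin 10) :
    ((1 : Matrix (B × B) (B × B) ℂ) - sig q).mulVec (kv q k) = 0 := by
  fin_cases k
  exacts [ker0 q h0, ker1 q h0, ker2 q h0, ker3 q h0, ker4 q h0,
    ker5 q h0, ker6 q h0, ker7 q h0, ker8 q h0, ker9 q h0]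

set_option maxHeartbeats 1000000 in
lemma kv_li (q : ℝ) : LinearIndependent ℂ (kv q) := by
  rw [Fintype.linearIndependent_iff]
  intro g hg
  have e0 : g 0 = 0 := by simpa [Fin.sum_univ_succ, kv] using congrFun hg (.m,.m)
  have e1 : g 1 = 0 := by simpa [Fin.sum_univ_succ, kv] using congrFun hg (.p,.p)
  have e2 : g 2 = 0 := by simpa [Fin.sum_univ_succ, kv] using congrFun hg (.o,.o)
  have e3 : g 3 = 0 := by simpa [Fin.sum_univ_succ, kv] using congrFun hg (.o,.m)
  have e4 : g 4 = 0 := by simpa [Fin.sum_univ_succ, kv] using congrFun hg (.m,.z)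
  have e5 : g 5 = 0 := by simpa [Fin.sum_univ_succ, kv] using congrFun hg (.o,.p)
  have e6 : g 6 = 0 := by simpa [Fin.sum_univ_succ, kv] using congrFun hg (.z,.p)
  have e7 : g 7 = 0 := by simpa [Fin.sum_univ_succ, kv] using congrFun hg (.o,.z)
  have e8 : g 8 = 0 := by simpa [Fin.sum_univ_succ, kv] using congrFun hg (.z,.z)
  have e9 : g 9 = 0 := by simpa [Fin.sum_univ_succ, kv] using congrFun hg (.p,.m)
  intro i
  fin_cases i
  exacts [e0, e1, e2, e3, e4, e5, e6, e7, e8, e9]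

set_option maxHeartbeats 1000000 in
lemma cols_li (q : ℝ) (h0 : 0 < q) :
    LinearIndependent ℂ (fun k : Fin 6 =>
      ((1 : Matrix (B × B) (B × B) ℂ) - sig q).mulVec (Pi.single (cls k) 1)) := by
  have hq : (q : ℂ) ≠ 0 := by exact_mod_cast h0.ne'
  rw [Fintype.linearIndependent_iff]
  intro g hg
  have e0 : g 0 = 0 := by
    simpa [Fin.sum_univ_succ, cls, sig, Matrix.sub_apply, Matrix.one_apply]
      using congrFun hg (.o,.m)
  have e1 : g 1 = 0 := by
    simpa [Fin.sum_univ_succ, cls, sig, Matrix.sub_apply, Matrix.one_apply]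
      using congrFun hg (.m,.z)
  have e2 : g 2 = 0 := by
    simpa [Fin.sum_univ_succ, cls, sig, Matrix.sub_apply, Matrix.one_apply]
      using congrFun hg (.o,.p)
  have e3 : g 3 = 0 := by
    simpa [Fin.sum_univ_succ, cls, sig, Matrix.sub_apply, Matrix.one_apply]
      using congrFun hg (.p,.z)
  have e4 : g 4 = 0 := by
    simpa [Fin.sum_univ_succ, cls, sig, Matrix.sub_apply, Matrix.one_apply]
      using congrFun hg (.o,.z)
  have e5 : g 5 = 0 := by
    have h := congrFun hg (.m,.p)
    simp [Fin.sum_univ_succ, cls, sig, Matrix.sub_apply, Matrix.one_apply] at h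
    rw [e4] at h
    simpa using h
  intro i
  fin_cases i
  exacts [e0, e1, e2, e3, e4, e5]

end Aux

/-- The antisymmetriser `A⁽²⁾ = id − σ` of the 4D₊ calculus has rank 6 on ℂ¹⁶,
equivalently its kernel has dimension 10. -/
theorem antisymmetriser_rank (q : ℝ) (h0 : 0 < q) (h1 : q < 1) :
    ((1 : Matrix (B × B) (B × B) ℂ) - sig q).rank = 6
      ∧ Module.finrank ℂ (LinearMap.ker ((1 - sig q).mulVecLin)) = 10 := by
  set A := (1 : Matrix (B × B) (B × B) ℂ) - sig q with hA
  -- rank ≥ 6 : six linearly independent columns lie in the range of mulVecLin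
  have h6 : 6 ≤ A.rank := by
    have hmem : ∀ k : Fin 6, A.mulVec (Pi.single (cls k) 1) ∈
        LinearMap.range A.mulVecLin := fun k =>
      ⟨Pi.single (cls k) 1, by simp [Matrix.mulVecLin_apply]⟩
    have hli : LinearIndependent ℂ (fun k : Fin 6 =>
        (⟨A.mulVec (Pi.single (cls k) 1), hmem k⟩ :
          LinearMap.range A.mulVecLin)) :=
      LinearIndependent.of_comp ((LinearMap.range A.mulVecLin).subtype)
        (cols_li q h0)
    simpa [Matrix.rank] using hli.fintype_card_le_finrank
  -- kernel ≥ 10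
  have hker : ∀ k, kv q k ∈ LinearMap.ker A.mulVecLin := by
    intro k
    simp only [LinearMap.mem_ker, Matrix.mulVecLin_apply, hA]
    exact kv_ker q h0 k
  have h10 : 10 ≤ Module.finrank ℂ (LinearMap.ker A.mulVecLin) := by
    have hli : LinearIndependent ℂ
        (fun i => (⟨kv q i, hker i⟩ : LinearMap.ker A.mulVecLin)) :=
      LinearIndependent.of_comp ((LinearMap.ker A.mulVecLin).subtype) (kv_li q)
    simpa using hli.fintype_card_le_finrank
  have hsum : A.rank + Module.finrank ℂ (LinearMap.ker A.mulVecLin) = 16 := by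
    have h := LinearMap.finrank_range_add_finrank_ker A.mulVecLin
    rw [Module.finrank_fintype_fun_eq_card] at h
    simpa [Matrix.rank, show Fintype.card (B × B) = 16 from rfl] using h
  exact ⟨by omega, by omega⟩
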